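/- arXiv:1410.4395 — 6 statements merged into one kernel-verified Lean document; each statement's English description precedes it below -/
import Mathlib

section
/- Let L be a cycle graph on n ≥ 3 vertices (equivalently, the parallel composition of two simple node sequences sharing their endpoints). Then any linear arrangement of L has cost at least 2·(n − 1). -/
lemma tele7 (f : ℕ → ℤ) : ∀ i j : ℕ, i ≤ j →
    |f i - f j| ≤ ∑ k ∈ Finset.Ico i j, |f k - f (k+1)| := by
  intro i j hij
  induction j, hij using Nat.le_induction with
  | base => simp
  | succ j hij ih =>
    rw [Finset.sum_Ico_succ_top hij]
    have h1 := abs_sub_le (f i) (f j) (f (j+1))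
    linarith

/-- any linear arrangement `π` of the cycle graph on `n ≥ 3` vertices
(vertices `1, …, n`, edges `{i, i+1}` for `1 ≤ i < n` together with `{n, 1}`) has
cost at least `2(n - 1)`. -/
theorem stmt7 (n : ℕ) (hn : 3 ≤ n) (π : ℕ → ℕ)
    (hπ : Set.BijOn π (Set.Icc 1 n) (Set.Icc 1 n)) :
    2 * (n - 1) ≤
      (∑ i ∈ Finset.Ico 1 n, ((π i : ℤ) - (π (i + 1) : ℤ)).natAbs)
        + ((π n : ℤ) - (π 1 : ℤ)).natAbs := by
  set f : ℕ → ℤ := fun i => (π i : ℤ) with hf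
  have h1 : (1 : ℕ) ∈ Set.Icc 1 n := by constructor <;> omega
  have hnn : n ∈ Set.Icc 1 n := by constructor <;> omega
  obtain ⟨a, ha, hpa⟩ := hπ.surjOn h1
  obtain ⟨b, hb, hpb⟩ := hπ.surjOn hnn
  have key : ∀ u v : ℕ, 1 ≤ u → u ≤ v → v ≤ n →
      2 * |f u - f v| ≤ (∑ i ∈ Finset.Ico 1 n, |f i - f (i+1)|) + |f n - f 1| := by
    intro u v h1u huv hvn
    have s1 : (∑ i ∈ Finset.Ico 1 u, |f i - f (i+1)|) + ∑ i ∈ Finset.Ico u n, |f i - f (i+1)|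
        = ∑ i ∈ Finset.Ico 1 n, |f i - f (i+1)| :=
      Finset.sum_Ico_consecutive _ h1u (le_trans huv hvn)
    have s2 : (∑ i ∈ Finset.Ico u v, |f i - f (i+1)|) + ∑ i ∈ Finset.Ico v n, |f i - f (i+1)|
        = ∑ i ∈ Finset.Ico u n, |f i - f (i+1)| :=
      Finset.sum_Ico_consecutive _ huv hvn
    have t1 := tele7 f u v huv
    have t2 := tele7 f 1 u h1u
    have t3 := tele7 f v n hvn
    have tri : |f u - f v| ≤ |f u - f 1| + |f 1 - f n| + |f n - f v| := by
      have := abs_sub_le (f u) (f 1) (f n)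
      have := abs_sub_le (f u) (f n) (f v)
      linarith
    rw [abs_sub_comm (f u) (f 1)] at tri
    rw [abs_sub_comm (f 1) (f n)] at tri
    rw [abs_sub_comm (f n) (f v)] at tri
    linarith
  have hab : a ≠ b := by
    intro h; rw [h, hpb] at hpa; omega
  have habs : ∀ u v : ℕ, π u = 1 → π v = n → |f u - f v| = (n : ℤ) - 1 := by
    intro u v hu hv
    simp only [hf, hu, hv]
    rw [abs_sub_comm]
    rw [abs_of_nonneg (by push_cast; omega)]; norm_num
  have main : (2 * ((n:ℤ) - 1)) ≤ (∑ i ∈ Finset.Ico 1 n, |f i - f (i+1)|) + |f n - f 1| := by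
    rcases le_total a b with h | h
    · have := key a b ha.1 h hb.2
      rw [habs a b hpa hpb] at this; linarith
    · have := key b a hb.1 h ha.2
      rw [abs_sub_comm, habs a b hpa hpb] at this; linarith
  have cast : ((2 * (n - 1) : ℕ) : ℤ) ≤
      ((∑ i ∈ Finset.Ico 1 n, ((π i : ℤ) - (π (i + 1) : ℤ)).natAbs
        + ((π n : ℤ) - (π 1 : ℤ)).natAbs : ℕ) : ℤ) := by
    push_cast [Int.natCast_natAbs, Nat.cast_sub (by omega : 1 ≤ n)]
    exact main
  exact_mod_cast cast
end

section
/- Let L be a path graph on n vertices with terminals being its two endpoints s and t, and let π be any linear arrangement of L. Let Δ_L be the minimum over the two terminals of the number of vertices strictly to one side (left or right, whichever is smaller) of that terminal in π. Then the cost of π is at least (n − 1) + Δ_L. -/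
open Finset

/-- Discrete intermediate value: if `P a` holds and `P b` fails with `a < b`,
there is a switch point. -/
lemma ivt_switch (P : ℕ → Prop) : ∀ (b a : ℕ), a < b → P a → ¬ P b →
    ∃ i, a ≤ i ∧ i < b ∧ P i ∧ ¬ P (i + 1) := by
  intro b
  induction b with
  | zero => omega
  | succ b ih =>
    intro a hab ha hb
    by_cases hPb : P b
    · exact ⟨b, by omega, by omega, hPb, hb⟩
    · rcases Nat.lt_or_ge a b with h | h
      · obtain ⟨i, h1, h2, h3, h4⟩ := ih a h ha hPb
        exact ⟨i, h1, by omega, h3, h4⟩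
      · have : a = b := by omega
        subst this; exact absurd ha hPb

/-- let `L` be the path graph on `n` vertices `1, …, n` with terminals
`s = 1` and `t = n`, and `π` a linear arrangement of `L`.  With
`Δ_L = min over w ∈ {1, n} of min(π(w) - 1, n - π(w))`, the cost of `π` is at least
`(n - 1) + Δ_L`. -/
theorem stmt8 (n : ℕ) (hn : 1 ≤ n) (π : ℕ → ℕ)
    (hπ : Set.BijOn π (Set.Icc 1 n) (Set.Icc 1 n)) :
    (n - 1) + min (min (π 1 - 1) (n - π 1)) (min (π n - 1) (n - π n))
      ≤ ∑ i ∈ Finset.Ico 1 n, ((π i : ℤ) - (π (i + 1) : ℤ)).natAbs := by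
  classical
  have hmap : ∀ x, 1 ≤ x → x ≤ n → 1 ≤ π x ∧ π x ≤ n := by
    intro x h1 h2
    have := hπ.mapsTo (show x ∈ Set.Icc 1 n from ⟨h1, h2⟩)
    simpa using this
  have hsurj : ∀ y, 1 ≤ y → y ≤ n → ∃ x, (1 ≤ x ∧ x ≤ n) ∧ π x = y := by
    intro y h1 h2
    have := hπ.surjOn (show y ∈ Set.Icc 1 n from ⟨h1, h2⟩)
    obtain ⟨x, hx, hxy⟩ := this
    exact ⟨x, by simpa using hx, hxy⟩
  -- rewrite each edge length as a sum of cut-crossing indicators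
  have key : ∀ i ∈ Ico 1 n, ((π i : ℤ) - (π (i + 1) : ℤ)).natAbs
      = ∑ k ∈ Ico 1 n,
          if min (π i) (π (i+1)) ≤ k ∧ k < max (π i) (π (i+1)) then 1 else 0 := by
    intro i hi
    simp only [mem_Ico] at hi
    obtain ⟨ha1, ha2⟩ := hmap i hi.1 (by omega)
    obtain ⟨hb1, hb2⟩ := hmap (i+1) (by omega) (by omega)
    rw [← Finset.card_filter]
    have hfil : (Ico 1 n).filter
        (fun k => min (π i) (π (i+1)) ≤ k ∧ k < max (π i) (π (i+1)))
        = Ico (min (π i) (π (i+1))) (max (π i) (π (i+1))) := by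
      ext k
      simp only [mem_filter, mem_Ico]
      omega
    rw [hfil, Nat.card_Ico]
    omega
  rw [Finset.sum_congr rfl key, Finset.sum_comm]
  -- per-cut lower bound
  have hbound : ∀ k ∈ Ico 1 n,
      (1 + if k < min (π 1) (π n) then 1 else 0)
        ≤ ∑ i ∈ Ico 1 n,
            if min (π i) (π (i+1)) ≤ k ∧ k < max (π i) (π (i+1)) then 1 else 0 := by
    intro k hk
    simp only [mem_Ico] at hk
    rw [← Finset.card_filter]
    set S := (Ico 1 n).filter
        (fun i => min (π i) (π (i+1)) ≤ k ∧ k < max (π i) (π (i+1))) with hS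
    by_cases hside : k < min (π 1) (π n)
    · -- both terminals strictly right of cut k: at least two crossings
      simp only [hside, if_pos]
      obtain ⟨m, ⟨hm1, hm2⟩, hmk⟩ := hsurj k hk.1 (by omega)
      have hm1' : 1 < m := by
        rcases Nat.lt_or_ge 1 m with h | h
        · exact h
        · exfalso; have : m = 1 := by omega
          subst this; omega
      have hmn : m < n := by
        rcases Nat.lt_or_ge m n with h | h
        · exact h
        · exfalso; have : m = n := by omega
          subst this; omega
      obtain ⟨i1, hi1a, hi1b, hi1c, hi1d⟩ :=
        ivt_switch (fun i => k < π i) m 1 hm1' (by omega) (by omega)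
      obtain ⟨i2, hi2a, hi2b, hi2c, hi2d⟩ :=
        ivt_switch (fun i => π i ≤ k) n m hmn (by omega) (by omega)
      have hmem1 : i1 ∈ S := by
        simp only [hS, mem_filter, mem_Ico]
        constructor
        · omega
        · omega
      have hmem2 : i2 ∈ S := by
        simp only [hS, mem_filter, mem_Ico]
        constructor
        · omega
        · omega
      have hne : i1 ≠ i2 := by omega
      calc 1 + 1 = ({i1, i2} : Finset ℕ).card := by
              rw [Finset.card_pair hne]
        _ ≤ S.card := Finset.card_le_card (by
              intro x hx
              simp only [mem_insert, mem_singleton] at hx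
              rcases hx with h | h <;> subst h <;> assumption)
    · -- at least one crossing always
      simp only [hside, if_neg, not_false_iff]
      obtain ⟨a, ⟨ha1, ha2⟩, hak⟩ := hsurj k hk.1 (by omega)
      obtain ⟨b, ⟨hb1, hb2⟩, hbk⟩ := hsurj (k+1) (by omega) (by omega)
      have hab : a ≠ b := by intro h; subst h; omega
      rcases Nat.lt_or_ge a b with h | h
      · obtain ⟨i, hia, hib, hic, hid⟩ :=
          ivt_switch (fun i => π i ≤ k) b a h (by omega) (by omega)
        have : i ∈ S := by
          simp only [hS, mem_filter, mem_Ico]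
          constructor
          · omega
          · omega
        calc 1 + 0 = 1 := by omega
          _ ≤ S.card := Finset.card_pos.mpr ⟨i, this⟩
      · have h' : b < a := by omega
        obtain ⟨i, hia, hib, hic, hid⟩ :=
          ivt_switch (fun i => k < π i) a b h' (by omega) (by omega)
        have : i ∈ S := by
          simp only [hS, mem_filter, mem_Ico]
          constructor
          · omega
          · omega
        calc 1 + 0 = 1 := by omega
          _ ≤ S.card := Finset.card_pos.mpr ⟨i, this⟩
  have hsum := Finset.sum_le_sum hbound
  refine le_trans ?_ hsum
  rw [Finset.sum_add_distrib, Finset.sum_const, ← Finset.card_filter]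
  have hfil2 : (Ico 1 n).filter (fun k => k < min (π 1) (π n)) = Ico 1 (min (π 1) (π n)) := by
    obtain ⟨h1, h2⟩ := hmap 1 le_rfl hn
    obtain ⟨h3, h4⟩ := hmap n hn le_rfl
    ext k
    simp only [mem_filter, mem_Ico]
    omega
  rw [hfil2, Nat.card_Ico, Nat.card_Ico, smul_eq_mul, mul_one]
  obtain ⟨h1, h2⟩ := hmap 1 le_rfl hn
  obtain ⟨h3, h4⟩ := hmap n hn le_rfl
  omega
end

section
/- Let G = (V, E) be the graph on vertex set {s, t} ∪ V_1 ∪ … ∪ V_m formed by the parallel composition of m ≥ 2 internally disjoint s–t paths, where path i has n_i ≥ 1 internal vertices (set V_i). Then any linear arrangement π of G has cost at least Σ_{i=1}^m n_i + max_i n_i + 1. -/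
/-- The length of an edge under a linear arrangement `π : V ≃ Fin n`. -/
def elen {V : Type*} {n : ℕ} (π : V ≃ Fin n) : Sym2 V → ℕ :=
  Sym2.lift ⟨fun u v => (((π u : ℕ) : ℤ) - ((π v : ℕ) : ℤ)).natAbs,
    fun u v => by simp only []; omega⟩

/-!
Cut the line between every two consecutive positions `c` and `c + 1`. An edge of length `ℓ`
crosses exactly `ℓ` of these `n - 1` cuts, so the cost is the number of (edge, cut) crossings.
Every cut is crossed by two distinct edges: if it separates `s` from `t`, then by two different
paths, which share no edge; otherwise some vertex `w` lies on the other side of the cut, and the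
path through `w` crosses it on the way from `s` to `w` and again from `w` to `t`. Hence the cost is
at least `2 (n - 1)`, and `n ≥ Σ nᵢ + 2` gives `2 (n - 1) ≥ Σ nᵢ + max nᵢ + 1`.
-/

open Finset SimpleGraph

section Cuts

variable {V : Type*} {n : ℕ} (π : V ≃ Fin n)

/-- Cut `c` lies between positions `c` and `c + 1`; `cuts π e` are the cuts crossed by `e`. -/
def cuts : Sym2 V → Finset ℕ :=
  Sym2.lift ⟨fun u v => Ico (min (π u : ℕ) (π v)) (max (π u : ℕ) (π v)),
    fun u v => by simp only [min_comm, max_comm]⟩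

variable {π}

lemma mem_cuts_mk {u v : V} {c : ℕ} :
    c ∈ cuts π s(u, v) ↔ Xor ((π u : ℕ) ≤ c) ((π v : ℕ) ≤ c) := by
  simp only [cuts, Sym2.lift_mk, mem_Ico, Xor]
  omega

lemma elen_eq_card_cuts (e : Sym2 V) : elen π e = #(cuts π e) := by
  induction e using Sym2.ind with
  | _ u v => simp only [elen, cuts, Sym2.lift_mk, Nat.card_Ico]; omega

lemma cuts_subset_range (e : Sym2 V) : cuts π e ⊆ range (n - 1) := by
  induction e using Sym2.ind with
  | _ u v =>
    intro c hc
    have := (π u).isLt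
    have := (π v).isLt
    simp only [cuts, Sym2.lift_mk, mem_Ico, mem_range] at hc ⊢
    omega

lemma sum_elen_eq_sum_card_filter_mem_cuts (E : Finset (Sym2 V)) :
    ∑ e ∈ E, elen π e = ∑ c ∈ range (n - 1), #{e ∈ E | c ∈ cuts π e} := by
  have hcuts (e : Sym2 V) :
      (range (n - 1)).bipartiteAbove (fun e c => c ∈ cuts π e) e = cuts π e :=
    filter_mem_eq_inter.trans (inter_eq_right.2 (cuts_subset_range e))
  rw [sum_congr rfl fun e _ => (elen_eq_card_cuts e).trans (congrArg card (hcuts e)).symm]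
  exact sum_card_bipartiteAbove_eq_sum_card_bipartiteBelow _

lemma mul_le_sum_elen_of_le_card_filter_mem_cuts (E : Finset (Sym2 V)) {k : ℕ}
    (h : ∀ c, c + 1 < n → k ≤ #{e ∈ E | c ∈ cuts π e}) :
    k * (n - 1) ≤ ∑ e ∈ E, elen π e := by
  calc k * (n - 1) = ∑ _c ∈ range (n - 1), k := by
        rw [sum_const, card_range, smul_eq_mul, mul_comm]
    _ ≤ ∑ c ∈ range (n - 1), #{e ∈ E | c ∈ cuts π e} :=
      sum_le_sum fun c hc => h c (by rw [mem_range] at hc; omega)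
    _ = ∑ e ∈ E, elen π e := (sum_elen_eq_sum_card_filter_mem_cuts E).symm

lemma exists_xor_le (x : Fin n) {c : ℕ} (hc : c + 1 < n) :
    ∃ y : Fin n, Xor ((x : ℕ) ≤ c) ((y : ℕ) ≤ c) := by
  by_cases hx : (x : ℕ) ≤ c
  · exact ⟨⟨c + 1, hc⟩, by simp [Xor, hx]⟩
  · exact ⟨⟨c, by omega⟩, by simp [Xor, hx]⟩

end Cuts

namespace SimpleGraph.Walk

variable {V : Type*} {G : SimpleGraph V} {n : ℕ} {π : V ≃ Fin n} {c : ℕ} {x y w : V}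

lemma exists_mem_edges_mem_cuts (p : G.Walk x y) (h : Xor ((π x : ℕ) ≤ c) ((π y : ℕ) ≤ c)) :
    ∃ e ∈ p.edges, c ∈ cuts π e := by
  rw [xor_iff_not_iff] at h
  obtain ⟨d, hd, hfst, hsnd⟩ :=
    p.exists_boundary_dart {v | (π v : ℕ) ≤ c ↔ (π x : ℕ) ≤ c} Iff.rfl fun hy => h hy.symm
  refine ⟨d.edge, List.mem_map_of_mem hd, ?_⟩
  simp only [Set.mem_ofPred_eq] at hfst hsnd
  rw [Dart.edge, mem_cuts_mk, xor_iff_not_iff]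
  tauto

lemma IsTrail.exists_ne_mem_edges_mem_cuts [DecidableEq V] {p : G.Walk x y} (hp : p.IsTrail)
    (hw : w ∈ p.support) (hxw : Xor ((π x : ℕ) ≤ c) ((π w : ℕ) ≤ c))
    (hwy : Xor ((π w : ℕ) ≤ c) ((π y : ℕ) ≤ c)) :
    ∃ e ∈ p.edges, ∃ e' ∈ p.edges, e ≠ e' ∧ c ∈ cuts π e ∧ c ∈ cuts π e' := by
  rw [← p.take_spec hw] at hp ⊢
  obtain ⟨e, he, hce⟩ := (p.takeUntil w hw).exists_mem_edges_mem_cuts hxw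
  obtain ⟨e', he', hce'⟩ := (p.dropUntil w hw).exists_mem_edges_mem_cuts hwy
  rw [edges_append]
  exact ⟨e, List.mem_append_left _ he, e', List.mem_append_right _ he',
    fun h => ((isTrail_append _ _).1 hp).2.2 he (h ▸ he'), hce, hce'⟩

lemma IsPath.card_support_toFinset_sdiff_pair [DecidableEq V] {p : G.Walk x y} (hp : p.IsPath)
    (hxy : x ≠ y) :
    #(p.support.toFinset \ {x, y}) = p.length - 1 := by
  have hsub : ({x, y} : Finset V) ⊆ p.support.toFinset := by
    simp [insert_subset_iff, p.start_mem_support, p.end_mem_support]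
  rw [card_sdiff_of_subset hsub, List.toFinset_card_of_nodup hp.support_nodup, length_support,
    card_pair hxy]
  omega

end SimpleGraph.Walk

section ParallelPaths

variable {V : Type*} {G : SimpleGraph V} {s t : V} {m : ℕ} {P : Fin m → G.Walk s t}

lemma eq_of_mem_edges_of_mem_edges (hpath : ∀ i, (P i).IsPath)
    (hlen : ∀ i, 2 ≤ (P i).length)
    (hdisj : ∀ i j, i ≠ j → ∀ v, v ∈ (P i).support → v ∈ (P j).support → v = s ∨ v = t)
    {i j : Fin m} {e : Sym2 V} (hi : e ∈ (P i).edges) (hj : e ∈ (P j).edges) : i = j := by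
  by_contra hij
  induction e using Sym2.ind with
  | _ u v =>
    have huv : u ≠ v := ((P i).adj_of_mem_edges hi).ne
    have hu := hdisj i j hij u ((P i).fst_mem_support_of_mem_edges hi)
      ((P j).fst_mem_support_of_mem_edges hj)
    have hv := hdisj i j hij v ((P i).snd_mem_support_of_mem_edges hi)
      ((P j).snd_mem_support_of_mem_edges hj)
    have hst_mem : s(s, t) ∈ (P i).edges := by
      rcases hu with rfl | rfl <;> rcases hv with rfl | rfl
      all_goals first | exact absurd rfl huv | simpa [Sym2.eq_swap] using hi
    have hone := (hpath i).length_eq_one_of_mem_edges hst_mem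
    have htwo := hlen i
    omega

lemma two_le_card_filter_mem_cuts [Fintype V] [DecidableEq V] [DecidableRel G.Adj] (hm : 2 ≤ m)
    (hpath : ∀ i, (P i).IsPath) (hlen : ∀ i, 2 ≤ (P i).length)
    (hdisj : ∀ i j, i ≠ j → ∀ v, v ∈ (P i).support → v ∈ (P j).support → v = s ∨ v = t)
    (hcover : ∀ v, ∃ i, v ∈ (P i).support) (π : V ≃ Fin (Fintype.card V)) {c : ℕ}
    (hc : c + 1 < Fintype.card V) :
    2 ≤ #{e ∈ G.edgeFinset | c ∈ cuts π e} := by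
  suffices ∃ i j, ∃ e ∈ (P i).edges, ∃ e' ∈ (P j).edges, e ≠ e' ∧ c ∈ cuts π e ∧ c ∈ cuts π e' by
    obtain ⟨i, j, e, he, e', he', hne, hce, hce'⟩ := this
    exact one_lt_card.2 ⟨e, by simp [(P i).edges_subset_edgeSet he, hce],
      e', by simp [(P j).edges_subset_edgeSet he', hce'], hne⟩
  by_cases hst : Xor ((π s : ℕ) ≤ c) ((π t : ℕ) ≤ c)
  · obtain ⟨e, he, hce⟩ := (P ⟨0, by omega⟩).exists_mem_edges_mem_cuts hst
    obtain ⟨e', he', hce'⟩ := (P ⟨1, by omega⟩).exists_mem_edges_mem_cuts hst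
    refine ⟨_, _, e, he, e', he', fun h => ?_, hce, hce'⟩
    subst h
    simpa using eq_of_mem_edges_of_mem_edges hpath hlen hdisj he he'
  · obtain ⟨y, hy⟩ := exists_xor_le (π s) hc
    obtain ⟨i, hi⟩ := hcover (π.symm y)
    have hsw : Xor ((π s : ℕ) ≤ c) ((π (π.symm y) : ℕ) ≤ c) := by rwa [π.apply_symm_apply]
    have hwt : Xor ((π (π.symm y) : ℕ) ≤ c) ((π t : ℕ) ≤ c) := by
      rw [xor_iff_not_iff] at hst hsw ⊢
      tauto
    exact ⟨i, i, (hpath i).isTrail.exists_ne_mem_edges_mem_cuts hi hsw hwt⟩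

lemma sum_length_sub_one_add_two_le_card [Fintype V] [DecidableEq V] (hst : s ≠ t)
    (hpath : ∀ i, (P i).IsPath)
    (hdisj : ∀ i j, i ≠ j → ∀ v, v ∈ (P i).support → v ∈ (P j).support → v = s ∨ v = t) :
    ∑ i, ((P i).length - 1) + 2 ≤ Fintype.card V := by
  set I := fun i => (P i).support.toFinset \ {s, t}
  have hI : ((univ : Finset (Fin m)) : Set (Fin m)).PairwiseDisjoint I := by
    intro i _ j _ hij
    refine disjoint_left.2 fun v hvi hvj => ?_
    simp only [I, mem_sdiff, List.mem_toFinset, mem_insert, mem_singleton] at hvi hvj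
    exact hvi.2 (hdisj i j hij v hvi.1 hvj.1)
  have hcompl : univ.biUnion I ⊆ {s, t}ᶜ := by
    intro v hv
    simp only [I, mem_biUnion, mem_sdiff] at hv
    obtain ⟨i, -, -, hv⟩ := hv
    exact mem_compl.2 hv
  have hcard := card_le_card hcompl
  rw [card_biUnion hI, card_compl, card_pair hst] at hcard
  simp only [I, (hpath _).card_support_toFinset_sdiff_pair hst] at hcard
  have htwo : 2 ≤ Fintype.card V := card_pair hst ▸ card_le_univ _
  omega

end ParallelPaths

theorem stmt9_general {V : Type*} [Fintype V] [DecidableEq V] (G : SimpleGraph V)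
    [DecidableRel G.Adj] (s t : V) (hst : s ≠ t) (m : ℕ) (hm : 2 ≤ m)
    (P : Fin m → G.Walk s t)
    (hpath : ∀ i, (P i).IsPath)
    (hlen : ∀ i, 2 ≤ (P i).length)
    (hdisj : ∀ i j, i ≠ j → ∀ v, v ∈ (P i).support → v ∈ (P j).support →
      v = s ∨ v = t)
    (hcover : ∀ v : V, ∃ i, v ∈ (P i).support)
    (π : V ≃ Fin (Fintype.card V)) :
    (∑ i, ((P i).length - 1)) + (Finset.univ.sup fun i => (P i).length - 1) + 1
      ≤ ∑ e ∈ G.edgeFinset, elen π e := by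
  have hcard := sum_length_sub_one_add_two_le_card hst hpath hdisj
  have hcost := mul_le_sum_elen_of_le_card_filter_mem_cuts G.edgeFinset
    fun c hc => two_le_card_filter_mem_cuts hm hpath hlen hdisj hcover π hc
  have hsup : (univ.sup fun i => (P i).length - 1) ≤ ∑ i, ((P i).length - 1) :=
    Finset.sup_le fun i _ =>
      single_le_sum (f := fun i => (P i).length - 1) (fun _ _ => Nat.zero_le _) (mem_univ i)
  omega

/-- let `G` be the parallel composition of `m ≥ 2` internally disjoint
`s`–`t` paths `P i`, where path `i` has `n_i = (P i).length - 1 ≥ 1` internal vertices.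
Then any linear arrangement `π` of `G` has cost at least `Σ n_i + max_i n_i + 1`. -/
theorem stmt9 {V : Type*} [Fintype V] [DecidableEq V] (G : SimpleGraph V)
    [DecidableRel G.Adj] (s t : V) (hst : s ≠ t) (m : ℕ) (hm : 2 ≤ m)
    (P : Fin m → G.Walk s t)
    (hpath : ∀ i, (P i).IsPath)
    (hlen : ∀ i, 2 ≤ (P i).length)
    (hdisj : ∀ i j, i ≠ j → ∀ v, v ∈ (P i).support → v ∈ (P j).support →
      v = s ∨ v = t)
    (hcover : ∀ v : V, ∃ i, v ∈ (P i).support)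
    (hedges : ∀ e ∈ G.edgeSet, ∃ i, e ∈ (P i).edges)
    (π : V ≃ Fin (Fintype.card V)) :
    (∑ i, ((P i).length - 1)) + (Finset.univ.sup fun i => (P i).length - 1) + 1
      ≤ ∑ e ∈ G.edgeFinset, elen π e :=
  stmt9_general G s t hst m hm P hpath hlen hdisj hcover π
end

section
/- Let G be a 'fan of paths': the parallel composition of m ≥ 2 internally disjoint s–t paths, where path i has n_i ≥ 1 internal vertices, and assume n_m = max_i n_i. Consider the arrangement π that places s at position 1, t at position 2, and then the internal vertices of path 1 in zigzag order, followed by the internal vertices of path 2 in zigzag order, and so on up to path m. Then the cost of π is at most 2·Σ_{i=1}^{m−1} (n_i + 1) + 2·(n_m + 1) + Σ_{i=1}^{m} Σ_{j=1}^{i−1} 2·n_j + m, and in particular the cost of π is O(m · Σ_i n_i). -/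
/-- The zigzag order of a block of `k` vertices: position (within the block) of the
`j`-th vertex (`1 ≤ j ≤ k`). -/
def zigzag (k j : ℕ) : ℕ := if 2 * j ≤ k + 1 then 2 * j - 1 else 2 * (k - j + 1)

/-- Offset of the block of the `i`-th path: `s` and `t` occupy positions 1 and 2, and
the blocks of internal vertices of paths `1, …, i-1` come before the block of path `i`. -/
def blockOffset (nn : ℕ → ℕ) (i : ℕ) : ℕ := 2 + ∑ j ∈ Finset.Ico 1 i, nn j

/-- Position of the `j`-th internal vertex of the `i`-th path in the fan arrangement. -/
def fanPos (nn : ℕ → ℕ) (i j : ℕ) : ℕ := blockOffset nn i + zigzag (nn i) j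

/-- for the fan of `m ≥ 2` internally disjoint `s`–`t` paths, path `i`
having `n_i ≥ 1` internal vertices with `n_m` maximal, the arrangement placing `s` at
position 1, `t` at position 2 and then the internal vertices of the paths block by
block in zigzag order has cost at most
`2·Σ_{i=1}^{m-1}(n_i + 1) + 2·(n_m + 1) + Σ_{i=1}^{m} Σ_{j=1}^{i-1} 2·n_j + m`. -/
theorem stmt10 (m : ℕ) (hm : 2 ≤ m) (nn : ℕ → ℕ)
    (hpos : ∀ i ∈ Finset.Icc 1 m, 1 ≤ nn i)
    (hmax : ∀ i ∈ Finset.Icc 1 m, nn i ≤ nn m) :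
    ∑ i ∈ Finset.Icc 1 m,
        (((1 : ℤ) - (fanPos nn i 1 : ℤ)).natAbs
          + ∑ j ∈ Finset.Ico 1 (nn i),
              ((fanPos nn i j : ℤ) - (fanPos nn i (j + 1) : ℤ)).natAbs
          + ((fanPos nn i (nn i) : ℤ) - (2 : ℤ)).natAbs)
      ≤ 2 * ∑ i ∈ Finset.Icc 1 (m - 1), (nn i + 1) + 2 * (nn m + 1)
        + ∑ i ∈ Finset.Icc 1 m, ∑ j ∈ Finset.Ico 1 i, 2 * nn j + m := by
  -- per-path bound
  have key : ∀ i ∈ Finset.Icc 1 m,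
      (((1 : ℤ) - (fanPos nn i 1 : ℤ)).natAbs
          + ∑ j ∈ Finset.Ico 1 (nn i),
              ((fanPos nn i j : ℤ) - (fanPos nn i (j + 1) : ℤ)).natAbs
          + ((fanPos nn i (nn i) : ℤ) - (2 : ℤ)).natAbs)
        ≤ 2 * (nn i + 1) + ∑ j ∈ Finset.Ico 1 i, 2 * nn j := by
    intro i hi
    have hk : 1 ≤ nn i := hpos i hi
    set k := nn i with hkdef
    set S := ∑ j ∈ Finset.Ico 1 i, nn j with hS
    have hB : blockOffset nn i = 2 + S := rfl
    have h1 : ((1 : ℤ) - (fanPos nn i 1 : ℤ)).natAbs = 2 + S := by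
      have hf : fanPos nn i 1 = 2 + S + 1 := by
        simp only [fanPos, hB, zigzag, ← hkdef]
        split_ifs <;> omega
      rw [hf]; push_cast; omega
    have h3 : ((fanPos nn i k : ℤ) - (2 : ℤ)).natAbs ≤ 2 + S := by
      have hz : zigzag k k ≤ 2 := by unfold zigzag; split_ifs <;> omega
      have hf : fanPos nn i k ≤ 2 + S + 2 := by
        simp only [fanPos, hB, ← hkdef]; omega
      have hf2 : 2 ≤ fanPos nn i k := by
        simp only [fanPos, hB]; omega
      omega
    have h2 : ∑ j ∈ Finset.Ico 1 k,
        ((fanPos nn i j : ℤ) - (fanPos nn i (j + 1) : ℤ)).natAbs ≤ 2 * (k - 1) := by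
      calc ∑ j ∈ Finset.Ico 1 k,
            ((fanPos nn i j : ℤ) - (fanPos nn i (j + 1) : ℤ)).natAbs
          ≤ ∑ j ∈ Finset.Ico 1 k, 2 := by
            apply Finset.sum_le_sum
            intro j hj
            rw [Finset.mem_Ico] at hj
            have heq : ((fanPos nn i j : ℤ) - (fanPos nn i (j + 1) : ℤ))
                = (zigzag k j : ℤ) - (zigzag k (j + 1) : ℤ) := by
              simp only [fanPos, ← hkdef]; push_cast; ring
            rw [heq]
            unfold zigzag
            split_ifs <;> omega
        _ = 2 * (k - 1) := by
            rw [Finset.sum_const, Nat.card_Ico, smul_eq_mul]; omega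
    have hd : ∑ j ∈ Finset.Ico 1 i, 2 * nn j = 2 * S := by
      rw [hS, Finset.mul_sum]
    omega
  have hsum := Finset.sum_le_sum key
  have hsplit : 2 * ∑ i ∈ Finset.Icc 1 (m - 1), (nn i + 1) + 2 * (nn m + 1)
      = 2 * ∑ i ∈ Finset.Icc 1 m, (nn i + 1) := by
    have hm1 : m - 1 + 1 = m := by omega
    rw [← hm1, Finset.sum_Icc_succ_top (by omega : 1 ≤ m - 1 + 1), hm1]
    ring
  have hdist : ∑ i ∈ Finset.Icc 1 m,
      (2 * (nn i + 1) + ∑ j ∈ Finset.Ico 1 i, 2 * nn j)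
      = 2 * ∑ i ∈ Finset.Icc 1 m, (nn i + 1)
        + ∑ i ∈ Finset.Icc 1 m, ∑ j ∈ Finset.Ico 1 i, 2 * nn j := by
    rw [Finset.sum_add_distrib, Finset.mul_sum]
  omega
end

section
/- Let G = K_{2,m} (the parallel composition of m ≥ 2 paths of length 2 from s to t, i.e., m internal vertices each adjacent to both s and t). Then every linear arrangement π of K_{2,m}, whose cost is Σ over internal vertices w of (|π(w) − π(s)| + |π(w) − π(t)|), has cost at least m²/4. -/
/-- An injective function `Fin m → ℕ` with all values positive has sum at least
`1 + 2 + ⋯ + m`, i.e. `m * (m + 1) ≤ 2 * ∑ g`. -/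
lemma sum_lower_aux (m : ℕ) (g : Fin m → ℕ) (hg : Function.Injective g)
    (h1 : ∀ i, 1 ≤ g i) : m * (m + 1) ≤ 2 * ∑ i : Fin m, g i := by
  classical
  set S : Finset ℕ := Finset.univ.image g with hS
  have hcard : S.card = m := by
    rw [hS, Finset.card_image_of_injective _ hg, Finset.card_univ, Fintype.card_fin]
  set f := S.orderEmbOfFin hcard with hf
  have hmem : ∀ k : Fin m, f k ∈ S := fun k => S.orderEmbOfFin_mem hcard k
  have hmono : StrictMono f := (S.orderEmbOfFin hcard).strictMono
  -- every element of S is ≥ 1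
  have hS1 : ∀ x ∈ S, 1 ≤ x := by
    intro x hx
    rw [hS, Finset.mem_image] at hx
    obtain ⟨i, _, rfl⟩ := hx
    exact h1 i
  -- f k ≥ k + 1
  have hfk : ∀ n : ℕ, ∀ k : Fin m, (k : ℕ) = n → n + 1 ≤ f k := by
    intro n
    induction n with
    | zero => intro k _; exact hS1 _ (hmem k)
    | succ n ih =>
      intro k hk
      have hn : n < m := by omega
      have hlt : (⟨n, hn⟩ : Fin m) < k := by
        simp [Fin.lt_def, hk]
      have := hmono hlt
      have := ih ⟨n, hn⟩ rfl
      omega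
  have hfk' : ∀ k : Fin m, (k : ℕ) + 1 ≤ f k := fun k => hfk k k rfl
  -- sum over S equals sum of g
  have hsum1 : ∑ x ∈ S, x = ∑ i : Fin m, g i := by
    rw [hS]
    exact Finset.sum_image (fun x _ y _ h => hg h)
  -- image of f is S
  have himg : Finset.univ.image f = S := by
    apply Finset.eq_of_subset_of_card_le
    · intro x hx
      rw [Finset.mem_image] at hx
      obtain ⟨k, _, rfl⟩ := hx
      exact hmem k
    · rw [hcard, Finset.card_image_of_injective _ hmono.injective,
        Finset.card_univ, Fintype.card_fin]
  have hsum2 : ∑ x ∈ S, x = ∑ k : Fin m, f k := by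
    rw [← himg]
    exact Finset.sum_image (fun x _ y _ h => hmono.injective h)
  have hge : ∑ k : Fin m, ((k : ℕ) + 1) ≤ ∑ k : Fin m, f k :=
    Finset.sum_le_sum (fun k _ => hfk' k)
  have hgauss : 2 * ∑ k : Fin m, ((k : ℕ) + 1) = m * (m + 1) := by
    rw [Finset.sum_add_distrib]
    simp only [Finset.sum_const, Finset.card_univ, Fintype.card_fin, smul_eq_mul, mul_one]
    have h1 : ∑ x : Fin m, (x : ℕ) = ∑ i ∈ Finset.range m, i :=
      Fin.sum_univ_eq_sum_range (fun i => i) m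
    have h2 := Finset.sum_range_id_mul_two (m + 1)
    rw [Finset.sum_range_succ] at h2
    simp only [Nat.add_sub_cancel] at h2
    ring_nf at h2 ⊢
    linarith
  calc m * (m + 1) = 2 * ∑ k : Fin m, ((k : ℕ) + 1) := hgauss.symm
    _ ≤ 2 * ∑ k : Fin m, f k := Nat.mul_le_mul_left 2 hge
    _ = 2 * ∑ x ∈ S, x := by rw [hsum2]
    _ = 2 * ∑ i : Fin m, g i := by rw [hsum1]

/-- every linear arrangement of `K_{2,m}` (vertices `s`, `t` and internal
vertices `w_1, …, w_m`, each adjacent to both `s` and `t`) has cost at least `m²/4`,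
i.e. `m² ≤ 4 · cost`. -/
theorem stmt11 {V : Type*} [Fintype V] [DecidableEq V] (m : ℕ) (hm : 2 ≤ m)
    (hcard : Fintype.card V = m + 2) (s t : V) (hst : s ≠ t)
    (w : Fin m → V) (hw : Function.Injective w)
    (hws : ∀ i, w i ≠ s) (hwt : ∀ i, w i ≠ t)
    (π : V ≃ Fin (Fintype.card V)) :
    m ^ 2 ≤ 4 * ∑ i : Fin m,
      ((((π s : ℕ) : ℤ) - ((π (w i) : ℕ) : ℤ)).natAbs
        + (((π t : ℕ) : ℤ) - ((π (w i) : ℕ) : ℤ)).natAbs) := by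
  classical
  set a : ℕ := (π s : ℕ) with ha
  set x : Fin m → ℕ := fun i => (π (w i) : ℕ) with hx
  set d : Fin m → ℕ := fun i => (((a : ℤ) - (x i : ℤ)).natAbs) with hd
  -- x i ≠ a
  have hxa : ∀ i, x i ≠ a := by
    intro i h
    apply hws i
    have : π (w i) = π s := Fin.ext h
    exact π.injective this
  have hd1 : ∀ i, 1 ≤ d i := by
    intro i
    have := hxa i
    simp only [hd]
    omega
  -- the injective encoding
  set g : Fin m → ℕ := fun i => 2 * d i - (if a < x i then 1 else 0) with hg
  have hg1 : ∀ i, 1 ≤ g i := by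
    intro i
    have := hd1 i
    simp only [hg]
    split_ifs <;> omega
  have hginj : Function.Injective g := by
    intro i j h
    have hdi : (a : ℤ) - x i = d i ∨ (a : ℤ) - x i = -(d i : ℤ) := Int.natAbs_eq _
    have hdj : (a : ℤ) - x j = d j ∨ (a : ℤ) - x j = -(d j : ℤ) := Int.natAbs_eq _
    have h1 := hd1 i
    have h2 := hd1 j
    simp only [hg] at h
    have hxij : x i = x j := by
      split_ifs at h <;> omega
    have : π (w i) = π (w j) := Fin.ext hxij
    exact hw (π.injective this)
  have hkey := sum_lower_aux m g hginj hg1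
  -- g i ≤ 2 * d i
  have hgd : ∀ i, g i ≤ 2 * d i := by
    intro i
    simp only [hg]
    split_ifs <;> omega
  have hsum : ∑ i : Fin m, g i ≤ ∑ i : Fin m, 2 * d i :=
    Finset.sum_le_sum (fun i _ => hgd i)
  have hsum2 : ∑ i : Fin m, 2 * d i = 2 * ∑ i : Fin m, d i := by
    rw [Finset.mul_sum]
  have hfinal : ∑ i : Fin m, d i ≤ ∑ i : Fin m,
      ((((π s : ℕ) : ℤ) - ((π (w i) : ℕ) : ℤ)).natAbs
        + (((π t : ℕ) : ℤ) - ((π (w i) : ℕ) : ℤ)).natAbs) := by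
    apply Finset.sum_le_sum
    intro i _
    simp only [hd, hx, ha]
    omega
  nlinarith [sq_nonneg m]
end

section
/- Let G be a series composition of two-terminal graphs X_1, …, X_k, where X_i has vertex count n_i (so |V(G)| = Σ n_i − (k − 1)). Suppose each X_i admits a linear arrangement of cost c_i in which its source occupies position 1 and its sink occupies position 2. Then G admits a linear arrangement of cost at most Σ_{i=1}^k c_i + 2·D·Σ_{i=1}^k n_i, where D is the maximum degree of G. -/
/-- The cost, under a block arrangement `f` of the block `W` (positions `1, …, |W|`),
of the edges of `G` lying inside `W`. -/
def blockCost {V : Type*} [Fintype V] [DecidableEq V] (G : SimpleGraph V)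
    [DecidableRel G.Adj] (W : Finset V) (f : V → ℕ) : ℕ :=
  ∑ e ∈ G.edgeFinset, Sym2.lift
    ⟨fun u v => if u ∈ W ∧ v ∈ W then ((f u : ℤ) - (f v : ℤ)).natAbs else 0,
      fun u v => by
        simp only [and_comm]
        rcases em (u ∈ W ∧ v ∈ W) with h | h <;> simp [h] <;> omega⟩ e

lemma elen_mk {V : Type*} {n : ℕ} (π : V ≃ Fin n) (u v : V) :
    elen π s(u, v) = (((π u : ℕ) : ℤ) - ((π v : ℕ) : ℤ)).natAbs := rfl

/-- The per-edge term of `blockCost`, as a standalone function. -/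
def bterm {V : Type*} [DecidableEq V] (W : Finset V) (f : V → ℕ) : Sym2 V → ℕ :=
  Sym2.lift
    ⟨fun u v => if u ∈ W ∧ v ∈ W then ((f u : ℤ) - (f v : ℤ)).natAbs else 0,
      fun u v => by
        simp only [and_comm]
        rcases em (u ∈ W ∧ v ∈ W) with h | h <;> simp [h] <;> omega⟩

lemma bterm_mk {V : Type*} [DecidableEq V] (W : Finset V) (f : V → ℕ) (u v : V) :
    bterm W f s(u, v)
      = if u ∈ W ∧ v ∈ W then ((f u : ℤ) - (f v : ℤ)).natAbs else 0 := rfl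

lemma blockCost_eq {V : Type*} [Fintype V] [DecidableEq V] (G : SimpleGraph V)
    [DecidableRel G.Adj] (W : Finset V) (f : V → ℕ) :
    blockCost G W f = ∑ e ∈ G.edgeFinset, bterm W f e := rfl

/-- let `G` be the series composition of two-terminal graphs
`X_1, …, X_k`, where `X_i` has vertex set `Vs i` (of size `n_i`), source `s i` and
sink `t i`, the sink of `X_i` being merged with the source of `X_{i+1}`.  If each `X_i`
admits a linear arrangement of cost `c_i` placing its source at position 1 and its sink
at position 2, then `G` admits a linear arrangement of cost at most
`Σ c_i + 2·D·Σ n_i`, where `D` is the maximum degree of `G`. -/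
theorem stmt17 {V : Type*} [Fintype V] [DecidableEq V] (G : SimpleGraph V)
    [DecidableRel G.Adj] (D k : ℕ) (hk : 1 ≤ k) (hD : ∀ v, G.degree v ≤ D)
    (Vs : Fin k → Finset V) (s t : Fin k → V)
    (hs : ∀ i, s i ∈ Vs i) (ht : ∀ i, t i ∈ Vs i) (hstne : ∀ i, s i ≠ t i)
    (hchain : ∀ (i : Fin k) (h : (i : ℕ) + 1 < k), t i = s ⟨(i : ℕ) + 1, h⟩)
    (hglue : ∀ (i : Fin k) (h : (i : ℕ) + 1 < k), Vs i ∩ Vs ⟨(i : ℕ) + 1, h⟩ = {t i})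
    (hfar : ∀ i j : Fin k, (i : ℕ) + 1 < (j : ℕ) → Vs i ∩ Vs j = ∅)
    (hcover : ∀ v : V, ∃ i, v ∈ Vs i)
    (hedges : ∀ e ∈ G.edgeFinset, ∃ i, ∀ x ∈ e, x ∈ Vs i)
    (c : Fin k → ℕ)
    (harr : ∀ i : Fin k, ∃ f : V → ℕ,
      Set.BijOn f (Vs i) (Set.Icc 1 (Vs i).card) ∧
      f (s i) = 1 ∧ f (t i) = 2 ∧ blockCost G (Vs i) f = c i) :
    ∃ π : V ≃ Fin (Fintype.card V),
      ∑ e ∈ G.edgeFinset, elen π e ≤ ∑ i, c i + 2 * D * ∑ i, (Vs i).card := by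
  classical
  choose f hfbij hfs hft hfc using harr
  set N : Fin k → ℕ := fun i => (Vs i).card with hNdef
  have hN2 : ∀ i, 2 ≤ N i := by
    intro i
    have hsub : ({s i, t i} : Finset V) ⊆ Vs i := by
      intro x hx
      rcases Finset.mem_insert.mp hx with h | h
      · exact h ▸ hs i
      · exact (Finset.mem_singleton.mp h) ▸ ht i
    have := Finset.card_le_card hsub
    rwa [Finset.card_pair (hstne i)] at this
  have hfmem : ∀ i v, v ∈ Vs i → 1 ≤ f i v ∧ f i v ≤ N i := by
    intro i v hv
    exact Set.mem_Icc.mp ((hfbij i).1 (Finset.mem_coe.mpr hv))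
  have hfinj : ∀ i, ∀ u ∈ Vs i, ∀ v ∈ Vs i, f i u = f i v → u = v := by
    intro i u hu v hv he
    exact (hfbij i).2.1 (Finset.mem_coe.mpr hu) (Finset.mem_coe.mpr hv) he
  have hf3 : ∀ i v, v ∈ Vs i → v ≠ s i → v ≠ t i → 3 ≤ f i v := by
    intro i v hv hvs hvt
    have h1 := hfmem i v hv
    have h2 : f i v ≠ 1 := fun h =>
      hvs (hfinj i v hv (s i) (hs i) (by rw [h, hfs]))
    have h3 : f i v ≠ 2 := fun h =>
      hvt (hfinj i v hv (t i) (ht i) (by rw [h, hft]))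
    omega
  set g : Fin k → V → ℕ :=
    fun i v => if v = t i then N i else if v = s i then 1 else f i v - 1 with hgdef
  have hgt : ∀ i, g i (t i) = N i := by
    intro i; simp [hgdef]
  have hgs : ∀ i, g i (s i) = 1 := by
    intro i; simp [hgdef, hstne i]
  have hclass : ∀ i w, w ∈ Vs i →
      (w = t i ∧ g i w = N i) ∨ (w = s i ∧ g i w = 1 ∧ f i w = 1) ∨
      (g i w + 1 = f i w ∧ 3 ≤ f i w ∧ f i w ≤ N i) := by
    intro i w hw
    by_cases h1 : w = t i
    · exact Or.inl ⟨h1, by rw [h1, hgt]⟩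
    · by_cases h2 : w = s i
      · exact Or.inr (Or.inl ⟨h2, by rw [h2, hgs], by rw [h2, hfs]⟩)
      · have h3 := hf3 i w hw h2 h1
        have h4 := hfmem i w hw
        refine Or.inr (Or.inr ⟨?_, h3, h4.2⟩)
        simp only [hgdef]; rw [if_neg h1, if_neg h2]; omega
  have hg1 : ∀ i v, v ∈ Vs i → 1 ≤ g i v ∧ g i v ≤ N i := by
    intro i v hv
    have hN := hN2 i
    rcases hclass i v hv with ⟨_, h⟩ | ⟨_, h, _⟩ | ⟨h, h3, hN'⟩ <;> omega
  have hginj : ∀ i, ∀ u ∈ Vs i, ∀ v ∈ Vs i, g i u = g i v → u = v := by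
    intro i u hu v hv he
    have hN := hN2 i
    rcases hclass i u hu with ⟨rfl, hgu⟩ | ⟨rfl, hgu, hfu⟩ | ⟨hgu, hfu3, hfuN⟩ <;>
      rcases hclass i v hv with ⟨h2, hgv⟩ | ⟨h2, hgv, hfv⟩ | ⟨hgv, hfv3, hfvN⟩
    · exact h2.symm
    · rw [h2] at he hgv; omega
    · omega
    · rw [h2] at he hgv; omega
    · exact h2.symm
    · omega
    · rw [h2] at he hgv; omega
    · rw [h2] at he hgv; omega
    · exact hfinj i u hu v hv (by omega)
  have hgsurj : ∀ i m, 1 ≤ m → m ≤ N i → ∃ v ∈ Vs i, g i v = m := by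
    intro i m h1 h2
    by_cases hm1 : m = N i
    · exact ⟨t i, ht i, by rw [hgt, hm1]⟩
    · by_cases hm2 : m = 1
      · exact ⟨s i, hs i, by rw [hgs, hm2]⟩
      · have hmem : (m + 1 : ℕ) ∈ Set.Icc 1 (N i) := ⟨by omega, by omega⟩
        obtain ⟨v, hv, hfv⟩ := (hfbij i).2.2 hmem
        have hv' : v ∈ Vs i := Finset.mem_coe.mp hv
        have hvs : v ≠ s i := by intro h; rw [h, hfs] at hfv; omega
        have hvt : v ≠ t i := by intro h; rw [h, hft] at hfv; omega
        refine ⟨v, hv', ?_⟩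
        simp only [hgdef]; rw [if_neg hvt, if_neg hvs]; omega
  set o' : ℕ → ℕ :=
    fun m => ∑ j ∈ Finset.range m, (if h : j < k then N ⟨j, h⟩ - 1 else 0) with ho'def
  have ho_succ : ∀ (j : ℕ) (hj : j < k), o' (j + 1) = o' j + (N ⟨j, hj⟩ - 1) := by
    intro j hj
    simp only [ho'def]
    rw [Finset.sum_range_succ, dif_pos hj]
  have ho_mono : ∀ a b : ℕ, a ≤ b → o' a ≤ o' b := by
    intro a b hab
    simp only [ho'def]
    exact Finset.sum_le_sum_of_subset (Finset.range_subset_range.mpr hab)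
  have htop : ∀ i : Fin k, o' (i : ℕ) + N i = o' ((i : ℕ) + 1) + 1 := by
    intro i
    have e := ho_succ (i : ℕ) i.isLt
    rw [show (⟨(i : ℕ), i.isLt⟩ : Fin k) = i from rfl] at e
    have := hN2 i
    omega
  choose idx hidx using hcover
  set pos : V → ℕ := fun v => o' ((idx v : ℕ)) + g (idx v) v with hposdef
  have hshare : ∀ i j : Fin k, (i : ℕ) < (j : ℕ) → ∀ v, v ∈ Vs i → v ∈ Vs j →
      (j : ℕ) = (i : ℕ) + 1 ∧ v = t i ∧ v = s j := by
    intro i j hij v hvi hvj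
    have hj1 : (j : ℕ) = (i : ℕ) + 1 := by
      by_contra hne
      have hlt : (i : ℕ) + 1 < (j : ℕ) := by omega
      have hv : v ∈ Vs i ∩ Vs j := Finset.mem_inter.mpr ⟨hvi, hvj⟩
      rw [hfar i j hlt] at hv
      exact absurd hv (Finset.notMem_empty v)
    have hik : (i : ℕ) + 1 < k := by have := j.isLt; omega
    have hjeq : j = ⟨(i : ℕ) + 1, hik⟩ := Fin.ext hj1
    have hvt : v = t i := by
      have hv : v ∈ Vs i ∩ Vs ⟨(i : ℕ) + 1, hik⟩ :=
        Finset.mem_inter.mpr ⟨hvi, by rw [← hjeq]; exact hvj⟩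
      rw [hglue i hik] at hv
      exact Finset.mem_singleton.mp hv
    exact ⟨hj1, hvt, by rw [hvt, hjeq]; exact hchain i hik⟩
  have hconslt : ∀ (i j : Fin k) v, (i : ℕ) < (j : ℕ) → v ∈ Vs i → v ∈ Vs j →
      o' (i : ℕ) + g i v = o' (j : ℕ) + g j v := by
    intro i j v hij hvi hvj
    obtain ⟨hj1, hvt, hvs⟩ := hshare i j hij v hvi hvj
    have hik : (i : ℕ) + 1 < k := by have := j.isLt; omega
    have e1 : g i v = N i := by rw [hvt, hgt]
    have e2 : g j v = 1 := by rw [hvs, hgs]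
    have e3 := htop i
    rw [e1, e2, hj1]
    omega
  have hcons : ∀ (i j : Fin k) v, v ∈ Vs i → v ∈ Vs j →
      o' (i : ℕ) + g i v = o' (j : ℕ) + g j v := by
    intro i j v hvi hvj
    rcases lt_trichotomy (i : ℕ) (j : ℕ) with h | h | h
    · exact hconslt i j v h hvi hvj
    · rw [Fin.ext h]
    · exact (hconslt j i v h hvj hvi).symm
  have hwd : ∀ (i : Fin k) v, v ∈ Vs i → pos v = o' (i : ℕ) + g i v := by
    intro i v hv
    simp only [hposdef]
    exact hcons (idx v) i v (hidx v) hv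
  have hrange : ∀ (i : Fin k) v, v ∈ Vs i →
      o' (i : ℕ) + 1 ≤ pos v ∧ pos v ≤ o' (i : ℕ) + N i := by
    intro i v hv
    rw [hwd i v hv]
    have := hg1 i v hv
    omega
  have hub : ∀ v, 1 ≤ pos v ∧ pos v ≤ o' k + 1 := by
    intro v
    have h1 := hrange (idx v) v (hidx v)
    have h2 := htop (idx v)
    have h3 : o' ((idx v : ℕ) + 1) ≤ o' k := ho_mono _ _ (idx v).isLt
    omega
  have hkey : ∀ u v : V, (idx u : ℕ) ≤ (idx v : ℕ) → pos u = pos v → u = v := by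
    intro u v hle he
    rcases eq_or_lt_of_le hle with heq | hlt
    · have hiv : idx u = idx v := Fin.ext heq
      have hvm : v ∈ Vs (idx u) := by rw [hiv]; exact hidx v
      rw [hwd (idx u) u (hidx u), hwd (idx u) v hvm] at he
      exact hginj (idx u) u (hidx u) v hvm (by omega)
    · have hu := hwd (idx u) u (hidx u)
      have hv := hwd (idx v) v (hidx v)
      have hgu := hg1 (idx u) u (hidx u)
      have hgv := hg1 (idx v) v (hidx v)
      have htopu := htop (idx u)
      have hj1 : (idx v : ℕ) = (idx u : ℕ) + 1 := by
        by_contra hne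
        have hlt2 : (idx u : ℕ) + 2 ≤ (idx v : ℕ) := by omega
        have hik2 : (idx u : ℕ) + 1 < k := by have := (idx v).isLt; omega
        have h5 := ho_succ ((idx u : ℕ) + 1) hik2
        rw [show (idx u : ℕ) + 1 + 1 = (idx u : ℕ) + 2 by omega] at h5
        have h6 : o' ((idx u : ℕ) + 2) ≤ o' (idx v : ℕ) := ho_mono _ _ hlt2
        have hN' := hN2 ⟨(idx u : ℕ) + 1, hik2⟩
        omega
      have hoe : o' ((idx v : ℕ)) = o' ((idx u : ℕ) + 1) := by rw [hj1]
      have hgN : g (idx u) u = N (idx u) ∧ g (idx v) v = 1 := by omega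
      have hut : u = t (idx u) :=
        hginj (idx u) u (hidx u) (t (idx u)) (ht (idx u)) (by rw [hgN.1, hgt])
      have hvs2 : v = s (idx v) :=
        hginj (idx v) v (hidx v) (s (idx v)) (hs (idx v)) (by rw [hgN.2, hgs])
      have hik : (idx u : ℕ) + 1 < k := by rw [← hj1]; exact (idx v).isLt
      have hje : idx v = ⟨(idx u : ℕ) + 1, hik⟩ := Fin.ext hj1
      rw [hut, hvs2, hje]
      exact hchain (idx u) hik
  have hinj : ∀ u v : V, pos u = pos v → u = v := by
    intro u v he
    rcases le_total (idx u : ℕ) (idx v : ℕ) with h | h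
    · exact hkey u v h he
    · exact (hkey v u h he.symm).symm
  have hsurjaux : ∀ b : ℕ, b ≤ k → ∀ m, 1 ≤ m → m ≤ o' b + 1 → ∃ v, pos v = m := by
    intro b
    induction b with
    | zero =>
      intro _ m h1 h2
      have h0 : o' 0 = 0 := by simp [ho'def]
      have hm : m = 1 := by omega
      refine ⟨s ⟨0, hk⟩, ?_⟩
      rw [hwd ⟨0, hk⟩ _ (hs ⟨0, hk⟩), hgs]
      simp only [Fin.val_mk]
      omega
    | succ b ih =>
      intro hbk m h1 h2
      have hb : b < k := hbk
      rw [ho_succ b hb] at h2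
      by_cases hm : m ≤ o' b + 1
      · exact ih (le_of_lt hb) m h1 hm
      · have hN := hN2 ⟨b, hb⟩
        obtain ⟨v, hv, hgv⟩ := hgsurj ⟨b, hb⟩ (m - o' b) (by omega) (by omega)
        refine ⟨v, ?_⟩
        rw [hwd ⟨b, hb⟩ v hv, hgv]
        simp only [Fin.val_mk]
        omega
  have hvub : ∀ v, pos v - 1 < o' k + 1 := fun v => by have := hub v; omega
  set F : V → Fin (o' k + 1) := fun v => ⟨pos v - 1, hvub v⟩ with hFdef
  have hFbij : Function.Bijective F := by
    constructor
    · intro u v huv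
      have h1 : pos u - 1 = pos v - 1 := by
        have := congrArg Fin.val huv
        simpa only [hFdef] using this
      have h2 := hub u
      have h3 := hub v
      exact hinj u v (by omega)
    · intro y
      obtain ⟨v, hv⟩ := hsurjaux k le_rfl ((y : ℕ) + 1) (by omega)
        (by have := y.isLt; omega)
      refine ⟨v, ?_⟩
      apply Fin.ext
      show pos v - 1 = (y : ℕ)
      omega
  have hcard : Fintype.card V = o' k + 1 :=
    (Fintype.card_of_bijective hFbij).trans (Fintype.card_fin _)
  refine ⟨(Equiv.ofBijective F hFbij).trans (finCongr hcard.symm), ?_⟩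
  set π : V ≃ Fin (Fintype.card V) :=
    (Equiv.ofBijective F hFbij).trans (finCongr hcard.symm) with hπdef
  have hπ : ∀ v, ((π v : Fin (Fintype.card V)) : ℕ) = pos v - 1 := fun v => rfl
  have helen : ∀ (i : Fin k) u v, u ∈ Vs i → v ∈ Vs i →
      elen π s(u, v) = ((g i u : ℤ) - (g i v : ℤ)).natAbs := by
    intro i u v hu hv
    rw [elen_mk, hπ u, hπ v]
    have h1 := hwd i u hu
    have h2 := hwd i v hv
    have h3 := hg1 i u hu
    have h4 := hg1 i v hv
    omega
  set blockOf : Sym2 V → Fin k :=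
    fun e => if h : e ∈ G.edgeFinset then (hedges e h).choose else ⟨0, hk⟩ with hbdef
  have hblockOf : ∀ e (he : e ∈ G.edgeFinset), ∀ x ∈ e, x ∈ Vs (blockOf e) := by
    intro e he
    simp only [hbdef]
    rw [dif_pos he]
    exact (hedges e he).choose_spec
  have hstep : ∀ i : Fin k,
      ∑ e ∈ G.edgeFinset.filter (fun e => blockOf e = i), elen π e
        ≤ c i + 2 * D * N i := by
    intro i
    have h2 : ∑ e ∈ G.edgeFinset.filter (fun e => blockOf e = i), elen π e
        ≤ blockCost G (Vs i) (g i) := by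
      rw [blockCost_eq]
      calc ∑ e ∈ G.edgeFinset.filter (fun e => blockOf e = i), elen π e
          = ∑ e ∈ G.edgeFinset.filter (fun e => blockOf e = i), bterm (Vs i) (g i) e := by
            refine Finset.sum_congr rfl ?_
            intro e he
            rw [Finset.mem_filter] at he
            have hin : ∀ x ∈ e, x ∈ Vs i := by
              have := hblockOf e he.1
              rwa [he.2] at this
            induction e using Sym2.ind with
            | _ u v =>
              have hu : u ∈ Vs i := hin u (Sym2.mem_mk_left u v)
              have hv : v ∈ Vs i := hin v (Sym2.mem_mk_right u v)
              rw [bterm_mk, if_pos ⟨hu, hv⟩, helen i u v hu hv]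
        _ ≤ ∑ e ∈ G.edgeFinset, bterm (Vs i) (g i) e :=
            Finset.sum_le_sum_of_subset (Finset.filter_subset _ _)
    have hfc' : ∑ e ∈ G.edgeFinset, bterm (Vs i) (f i) e = c i := by
      rw [← blockCost_eq]; exact hfc i
    have hper : ∀ e ∈ G.edgeFinset, bterm (Vs i) (g i) e
        ≤ bterm (Vs i) (f i) e
          + ((if (∀ x ∈ e, x ∈ Vs i) ∧ t i ∈ e then N i else 0)
            + (if (∀ x ∈ e, x ∈ Vs i) then 1 else 0)) := by
      intro e he
      induction e using Sym2.ind with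
      | _ u v =>
        rw [bterm_mk, bterm_mk]
        by_cases hin : u ∈ Vs i ∧ v ∈ Vs i
        · have hin' : ∀ x ∈ (s(u, v) : Sym2 V), x ∈ Vs i := by
            intro x hx
            rcases Sym2.mem_iff.mp hx with h | h
            · exact h ▸ hin.1
            · exact h ▸ hin.2
          rw [if_pos hin, if_pos hin, if_pos hin']
          have hgu := hg1 i u hin.1
          have hgv := hg1 i v hin.2
          by_cases hti : u = t i ∨ v = t i
          · have htmem : t i ∈ (s(u, v) : Sym2 V) := by
              rcases hti with h | h
              · exact Sym2.mem_iff.mpr (Or.inl h.symm)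
              · exact Sym2.mem_iff.mpr (Or.inr h.symm)
            rw [if_pos ⟨hin', htmem⟩]
            omega
          · push_neg at hti
            have hcond : ¬((∀ x ∈ (s(u, v) : Sym2 V), x ∈ Vs i) ∧ t i ∈ (s(u, v) : Sym2 V)) := by
              rintro ⟨-, hmem⟩
              rcases Sym2.mem_iff.mp hmem with h | h
              · exact hti.1 h.symm
              · exact hti.2 h.symm
            rw [if_neg hcond]
            have hu' : (g i u = 1 ∧ f i u = 1) ∨ (g i u + 1 = f i u ∧ 3 ≤ f i u) := by
              rcases hclass i u hin.1 with ⟨h1, _⟩ | ⟨h1, hh1, hh2⟩ | ⟨h1, h3, h4⟩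
              · exact absurd h1 hti.1
              · exact Or.inl ⟨hh1, hh2⟩
              · exact Or.inr ⟨h1, h3⟩
            have hv' : (g i v = 1 ∧ f i v = 1) ∨ (g i v + 1 = f i v ∧ 3 ≤ f i v) := by
              rcases hclass i v hin.2 with ⟨h1, _⟩ | ⟨h1, hh1, hh2⟩ | ⟨h1, h3, h4⟩
              · exact absurd h1 hti.2
              · exact Or.inl ⟨hh1, hh2⟩
              · exact Or.inr ⟨h1, h3⟩
            omega
        · simp only [if_neg hin]
          exact Nat.zero_le _
    have hsum1 : ∑ e ∈ G.edgeFinset,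
        (if (∀ x ∈ e, x ∈ Vs i) ∧ t i ∈ e then N i else 0) ≤ D * N i := by
      rw [← Finset.sum_filter, Finset.sum_const, smul_eq_mul]
      have hsub : G.edgeFinset.filter (fun e => (∀ x ∈ e, x ∈ Vs i) ∧ t i ∈ e)
          ⊆ G.incidenceFinset (t i) := by
        intro e he
        rw [Finset.mem_filter] at he
        rw [SimpleGraph.mem_incidenceFinset]
        exact ⟨SimpleGraph.mem_edgeFinset.mp he.1, he.2.2⟩
      have hcard1 := Finset.card_le_card hsub
      rw [SimpleGraph.card_incidenceFinset_eq_degree] at hcard1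
      exact Nat.mul_le_mul_right _ (hcard1.trans (hD (t i)))
    have hsum2 : ∑ e ∈ G.edgeFinset,
        (if (∀ x ∈ e, x ∈ Vs i) then 1 else 0) ≤ D * N i := by
      rw [← Finset.sum_filter, Finset.sum_const, smul_eq_mul, mul_one]
      have hsub : G.edgeFinset.filter (fun e => ∀ x ∈ e, x ∈ Vs i)
          ⊆ (Vs i).biUnion (fun v => G.incidenceFinset v) := by
        intro e he
        induction e using Sym2.ind with
        | _ u v =>
          rw [Finset.mem_filter] at he
          refine Finset.mem_biUnion.mpr ⟨u, he.2 u (Sym2.mem_mk_left u v), ?_⟩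
          rw [SimpleGraph.mem_incidenceFinset]
          exact ⟨SimpleGraph.mem_edgeFinset.mp he.1, Sym2.mem_mk_left u v⟩
      have hcard1 := Finset.card_le_card hsub
      have hcard2 := Finset.card_biUnion_le (s := Vs i)
        (t := fun v => G.incidenceFinset v)
      have hcard3 : ∑ v ∈ Vs i, (G.incidenceFinset v).card ≤ N i * D := by
        calc ∑ v ∈ Vs i, (G.incidenceFinset v).card
            ≤ ∑ _v ∈ Vs i, D := by
              refine Finset.sum_le_sum ?_
              intro v _
              rw [SimpleGraph.card_incidenceFinset_eq_degree]
              exact hD v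
          _ = N i * D := by rw [Finset.sum_const, smul_eq_mul]
      calc (G.edgeFinset.filter (fun e => ∀ x ∈ e, x ∈ Vs i)).card
          ≤ N i * D := (hcard1.trans hcard2).trans hcard3
        _ = D * N i := Nat.mul_comm _ _
    have h3 : blockCost G (Vs i) (g i) ≤ c i + 2 * D * N i := by
      rw [blockCost_eq]
      calc ∑ e ∈ G.edgeFinset, bterm (Vs i) (g i) e
          ≤ ∑ e ∈ G.edgeFinset, (bterm (Vs i) (f i) e
            + ((if (∀ x ∈ e, x ∈ Vs i) ∧ t i ∈ e then N i else 0)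
              + (if (∀ x ∈ e, x ∈ Vs i) then 1 else 0))) :=
            Finset.sum_le_sum hper
        _ = (∑ e ∈ G.edgeFinset, bterm (Vs i) (f i) e)
            + ((∑ e ∈ G.edgeFinset, (if (∀ x ∈ e, x ∈ Vs i) ∧ t i ∈ e then N i else 0))
              + (∑ e ∈ G.edgeFinset, (if (∀ x ∈ e, x ∈ Vs i) then 1 else 0))) := by
            rw [Finset.sum_add_distrib, Finset.sum_add_distrib]
        _ ≤ c i + (D * N i + D * N i) := by
            rw [hfc']
            exact Nat.add_le_add_left (Nat.add_le_add hsum1 hsum2) _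
        _ = c i + 2 * D * N i := by ring
    exact h2.trans h3
  rw [← Finset.sum_fiberwise G.edgeFinset blockOf (elen π)]
  calc ∑ i : Fin k, ∑ e ∈ G.edgeFinset.filter (fun e => blockOf e = i), elen π e
      ≤ ∑ i : Fin k, (c i + 2 * D * N i) := Finset.sum_le_sum (fun i _ => hstep i)
    _ = ∑ i, c i + 2 * D * ∑ i, N i := by
        rw [Finset.sum_add_distrib, ← Finset.mul_sum]
end
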